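/- Let K be a compact Hausdorff space such that the weight w(K) is a strong limit cardinal. Then w(K) = bd(K). -/

import Mathlib

/-!
A bidiscrete system injects into pairs of basic open sets, so `bd K ≤ w(K)`. Conversely, if
`2 ^ λ < w(K)`, then fewer than `w(K)` continuous functions never separate the points of `K`,
and a transfinite recursion produces a semi-bidiscrete sequence of length `(2 ^ λ)⁺`: functions
`f i` with `f i (x i) = 0`, `f i (y i) = 1` and `f i (x j) = f i (y j)` for `i < j`. Colour a
pair `i < j` by rationals separating `f j (x i)` from `f j (y i)`; the Erdős–Rado theorem
`(2 ^ λ)⁺ → (λ⁺)²_λ` yields a homogeneous set of size `λ⁺` on which, after clamping,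
`f j (x i) - f j (y i)` is a constant `δ`, and the differences `f b - f a` along suitable pairs
`a < b` of it form a bidiscrete system of size `λ⁺`. When `w(K)` is a strong limit,
`bd K < w(K)` would therefore give `(bd K)⁺ ≤ bd K`.
-/

open Cardinal

/-- The weight of a topological space: the least cardinality of a base for the topology. -/
noncomputable def weight (K : Type) [TopologicalSpace K] : Cardinal :=
  sInf {c : Cardinal | ∃ B : Set (Set K), TopologicalSpace.IsTopologicalBasis B ∧ c = #B}

/-- `bd K` is the supremum of the cardinalities of bidiscrete systems in `K`. -/
noncomputable def bd (K : Type) [TopologicalSpace K] : Cardinal :=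
  sSup {c : Cardinal | ∃ (ι : Type) (x y : ι → K) (f : ι → C(K, ℝ)),
    c = #ι ∧ (∀ α, f α (x α) = 0 ∧ f α (y α) = 1) ∧
    ∀ α β, α ≠ β → f α (x β) = f α (y β)}

open Set TopologicalSpace

universe u

namespace ErdosRado

variable {T C : Type u} (col : Sym2 T → C)

open Classical in
noncomputable def extend [Nonempty T] {I : Type u} (x : I → T) (τ : I → C) : T :=
  if h : ∃ v ∉ range x, ∀ i, col s(x i, v) = τ i then h.choose else Classical.arbitrary T

lemma extend_spec [Nonempty T] {I : Type u} {x : I → T} {τ : I → C}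
    (h : ∃ v ∉ range x, ∀ i, col s(x i, v) = τ i) :
    extend col x τ ∉ range x ∧ ∀ i, col s(x i, extend col x τ) = τ i := by
  classical
  rw [extend, dif_pos h]
  exact h.choose_spec

variable {L : Type u} [LinearOrder L] [WellFoundedLT L] [Nonempty T]

noncomputable def seq (u : T) : L → T :=
  wellFounded_lt.fix fun ξ rec =>
    extend col (fun η : Iio ξ => rec η η.2) (fun η => col s(rec η η.2, u))

lemma seq_eq (u : T) (ξ : L) :
    seq col u ξ =
      extend col (fun η : Iio ξ => seq col u η.1) (fun η => col s(seq col u η.1, u)) :=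
  wellFounded_lt.fix_eq _ ξ

lemma seq_eq_seq_of_colors_eq {u u' : T} {ξ : L}
    (h : ∀ η < ξ, col s(seq col u η, u) = col s(seq col u' η, u')) :
    seq col u ξ = seq col u' ξ := by
  induction ξ using WellFoundedLT.induction with
  | _ ξ ih =>
    rw [seq_eq, seq_eq]
    congr 1 <;> funext η
    · exact ih η η.2 fun ζ hζ => h ζ (hζ.trans η.2)
    · exact h η η.2

lemma seq_spec_of_notMem_range {u : T} (hu : u ∉ range (seq col u : L → T)) :
    Function.Injective (seq col u : L → T) ∧
      ∀ η ξ : L, η < ξ → col s(seq col u η, seq col u ξ) = col s(seq col u η, u) := by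
  have key : ∀ ξ : L, seq col u ξ ∉ seq col u '' Iio ξ ∧
      ∀ η < ξ, col s(seq col u η, seq col u ξ) = col s(seq col u η, u) := by
    intro ξ
    have hu_ext : ∃ v ∉ range (fun η : Iio ξ => seq col u η.1),
        ∀ η : Iio ξ, col s(seq col u η.1, v) = col s(seq col u η.1, u) :=
      ⟨u, fun ⟨η, hη⟩ => hu ⟨η, hη⟩, fun _ => rfl⟩
    obtain ⟨hnew, hcol⟩ := seq_eq col u ξ ▸ extend_spec col hu_ext
    exact ⟨fun ⟨η, hη, heq⟩ => hnew ⟨⟨η, hη⟩, heq⟩, fun η hη => hcol ⟨η, hη⟩⟩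
  refine ⟨fun η ξ heq => ?_, fun η ξ h => (key ξ).2 η h⟩
  by_contra hne
  rcases lt_or_gt_of_ne hne with h | h
  · exact (key ξ).1 ⟨η, h, heq⟩
  · exact (key η).1 ⟨ξ, h, heq.symm⟩

/-- If every `u` occurred in its own sequence, `u` would be determined by the place where it
occurs and the colours it has against the earlier points; there are at most `2 ^ κ` such data. -/
lemma exists_notMem_range_seq {κ : Cardinal} (hκ : ℵ₀ ≤ κ) (hC : #C ≤ κ) (hL : #L ≤ 2 ^ κ)
    (hIio : ∀ ξ : L, #(Iio ξ) ≤ κ) (hT : 2 ^ κ < #T) :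
    ∃ u, u ∉ range (seq col u : L → T) := by
  by_contra! hall
  choose η hη using hall
  have hfiber : ∀ ξ, #{u // η u = ξ} ≤ 2 ^ κ := fun ξ => calc
    #{u // η u = ξ} ≤ #(Iio ξ → C) := by
      refine mk_le_of_injective (f := fun u (ζ : Iio ξ) => col s(seq col u.1 ζ.1, u.1)) ?_
      rintro ⟨u, rfl⟩ ⟨u', hu'⟩ hcol
      ext
      calc u = seq col u (η u) := (hη u).symm
        _ = seq col u' (η u') := by
          rw [hu']
          exact seq_eq_seq_of_colors_eq col fun ζ hζ => congrFun hcol ⟨ζ, hu' ▸ hζ⟩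
        _ = u' := hη u'
    _ = #C ^ #(Iio ξ) := (power_def _ _).symm
    _ ≤ κ ^ κ := (power_le_power_right hC).trans
        (power_le_power_left (aleph0_pos.trans_le hκ).ne' (hIio ξ))
    _ = 2 ^ κ := power_self_eq hκ
  refine hT.not_ge ?_
  calc #T = #(Σ ξ, {u // η u = ξ}) := mk_congr (Equiv.sigmaFiberEquiv η).symm
    _ = sum fun ξ => #{u // η u = ξ} := mk_sigma _
    _ ≤ sum fun _ : L => 2 ^ κ := sum_le_sum _ _ hfiber
    _ = #L * 2 ^ κ := sum_const' _ _
    _ ≤ 2 ^ κ * 2 ^ κ := mul_le_mul_left hL _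
    _ = 2 ^ κ := mul_eq_self (hκ.trans (cantor κ).le)

end ErdosRado

theorem erdos_rado {κ : Cardinal.{u}} (hκ : ℵ₀ ≤ κ) {T C : Type u} (hC : #C ≤ κ)
    (hT : 2 ^ κ < #T) (col : Sym2 T → C) :
    ∃ s : Set T, ∃ c, Order.succ κ ≤ #s ∧ ∀ a ∈ s, ∀ b ∈ s, a ≠ b → col s(a, b) = c := by
  have : Nonempty T := mk_ne_zero_iff.1 ((power_pos κ two_pos).trans hT).ne'
  let L := (Order.succ κ).ord.ToType
  have hL : #L = Order.succ κ := by rw [mk_toType, card_ord]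
  have hIio : ∀ ξ : L, #(Iio ξ) ≤ κ := fun ξ =>
    Order.lt_succ_iff.1 <| (mk_Iio_lt ξ (by rw [hL, Ordinal.type_toType])).trans_eq hL
  obtain ⟨u, hu⟩ := ErdosRado.exists_notMem_range_seq (L := L) col hκ hC
    (hL.trans_le (Order.succ_le_of_lt (cantor κ))) hIio hT
  obtain ⟨hinj, hcol⟩ := ErdosRado.seq_spec_of_notMem_range col hu
  set x : L → T := ErdosRado.seq col u
  have hcof : #C < (Order.succ κ).ord.cof := by
    rw [(isRegular_succ hκ).cof_ord]
    exact hC.trans_lt (Order.lt_succ κ)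
  obtain ⟨c, hc⟩ := infinite_pigeonhole_card (fun ξ => col s(x ξ, u)) (Order.succ κ) hL.ge
    (hκ.trans (Order.le_succ κ)) hcof
  refine ⟨x '' ((fun ξ => col s(x ξ, u)) ⁻¹' {c}), c, (mk_image_eq hinj).symm ▸ hc, ?_⟩
  rintro _ ⟨η, hη, rfl⟩ _ ⟨ξ, hξ, rfl⟩ hne
  rcases lt_or_gt_of_ne (hinj.ne_iff.1 hne) with h | h
  · exact (hcol η ξ h).trans hη
  · exact Sym2.eq_swap ▸ (hcol ξ η h).trans hξ

/-- The pairs are `(ω * γ, ω * γ + 1)` for `γ < κ.ord`, carried into `H`; as `ω * γ` is never a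
successor, no right end `ω * γ' + 1` falls into another pair. -/
lemma exists_pairs_of_le_mk {O : Type} [LinearOrder O] [WellFoundedLT O] {κ : Cardinal}
    (hκ : ℵ₀ < κ) {H : Set O} (hH : κ ≤ #H) :
    ∃ a b : κ.ord.ToType → O, (∀ i, a i ∈ H ∧ b i ∈ H ∧ a i < b i) ∧
      ∀ i j, i ≠ j → b j ∉ Icc (a i) (b i) := by
  obtain ⟨e⟩ := Ordinal.type_le_iff'.1 <| (Ordinal.type_toType κ.ord).trans_le <|
    ord_le.2 (Ordinal.card_type (α := H) (· < ·) ▸ hH)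
  let p : Iio κ.ord → O := fun γ => e (Ordinal.ToType.mk γ)
  have hp : StrictMono p := fun _ _ h => e.map_rel_iff.2 (Ordinal.ToType.mk.lt_iff_lt.2 h)
  let γ : κ.ord.ToType → Ordinal := fun i => Ordinal.omega0 * (Ordinal.ToType.mk.symm i).1
  have hγ : ∀ i, γ i + 1 < κ.ord := fun i =>
    (isSuccLimit_ord hκ.le).add_one_lt <| lt_ord.2 <| by
      rw [Ordinal.card_mul, Ordinal.card_omega0]
      exact mul_lt_of_lt hκ.le hκ (lt_ord.1 (Ordinal.ToType.mk.symm i).2)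
  refine ⟨fun i => p ⟨γ i, (lt_add_one (γ i)).trans (hγ i)⟩, fun i => p ⟨γ i + 1, hγ i⟩,
    fun i => ⟨(e _).2, (e _).2, hp (lt_add_one (γ i))⟩, fun i j hij ⟨h1, h2⟩ => hij ?_⟩
  replace h1 : γ i ≤ Order.succ (γ j) := hp.le_iff_le.1 h1
  replace h2 : Order.succ (γ j) ≤ Order.succ (γ i) := hp.le_iff_le.1 h2
  have hij' : γ i ≤ γ j := Order.lt_succ_iff.1 <| h1.lt_of_ne
    ((Ordinal.isSuccPrelimit_mul_left Ordinal.isSuccLimit_omega0).succ_ne _).symm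
  exact Ordinal.ToType.mk.symm.injective <| Subtype.ext <| mul_left_cancel₀
    Ordinal.omega0_ne_zero (hij'.antisymm (Order.succ_le_succ_iff.1 h2))

section Weight

variable {K : Type} [TopologicalSpace K]

variable (K) in
lemma exists_isTopologicalBasis_mk_eq_weight :
    ∃ B : Set (Set K), IsTopologicalBasis B ∧ #B = weight K := by
  obtain ⟨B, hB, h⟩ := csInf_mem (s := {c | ∃ B : Set (Set K), IsTopologicalBasis B ∧ c = #B})
    ⟨_, _, isTopologicalBasis_opens, rfl⟩
  exact ⟨B, hB, h.symm⟩

lemma weight_le_mk {B : Set (Set K)} (hB : IsTopologicalBasis B) : weight K ≤ #B :=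
  csInf_le' ⟨B, hB, rfl⟩

lemma isEmpty_of_weight_eq_zero (h : weight K = 0) : IsEmpty K := by
  obtain ⟨B, hB, hBw⟩ := exists_isTopologicalBasis_mk_eq_weight K
  rw [h, mk_eq_zero_iff, isEmpty_coe_sort] at hBw
  exact univ_eq_empty_iff.1 (by simpa [hBw] using hB.sUnion_eq.symm)

lemma weight_le_two_power_mk : weight K ≤ 2 ^ #K :=
  (weight_le_mk isTopologicalBasis_opens).trans <| (mk_set_le _).trans_eq mk_set

lemma isTopologicalBasis_iInter_finset_of_separating {X E : Type*} [TopologicalSpace X]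
    [CompactSpace X] (S : E → Set X) (hS : ∀ e, IsOpen (S e))
    (hsep : ∀ x y, x ≠ y → ∃ e e', x ∈ S e ∧ y ∈ S e' ∧ Disjoint (S e) (S e')) :
    IsTopologicalBasis (range fun s : Finset E => ⋂ e ∈ s, S e) := by
  classical
  refine isTopologicalBasis_of_isOpen_of_nhds ?_ fun a U haU hU => ?_
  · rintro _ ⟨s, rfl⟩
    exact isOpen_biInter_finset fun e _ => hS e
  choose e e' he he' hdisj using fun w : (Uᶜ : Set X) => hsep a w fun h => w.2 (h ▸ haU)
  obtain ⟨t, ht⟩ := hU.isClosed_compl.isCompact.elim_finite_subcover (S ∘ e') (fun w => hS _)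
    fun w hw => mem_iUnion.2 ⟨⟨w, hw⟩, he' _⟩
  refine ⟨_, ⟨t.image e, rfl⟩, mem_iInter₂.2 fun _ h => ?_, fun z hz => ?_⟩
  · obtain ⟨w, -, rfl⟩ := Finset.mem_image.1 h
    exact he w
  by_contra hzU
  obtain ⟨w, hw, hzw⟩ := mem_iUnion₂.1 (ht hzU)
  exact (hdisj w).le_bot ⟨mem_iInter₂.1 hz _ (Finset.mem_image_of_mem e hw), hzw⟩

lemma weight_le_of_separating [CompactSpace K] {ι Y : Type} [TopologicalSpace Y] [T2Space Y]
    [SecondCountableTopology Y] (g : ι → C(K, Y)) (hg : ∀ x y, x ≠ y → ∃ i, g i x ≠ g i y) :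
    weight K ≤ max ℵ₀ #ι := by
  classical
  let E := ι × countableBasis Y
  have hB := isTopologicalBasis_iInter_finset_of_separating (fun e : E => g e.1 ⁻¹' e.2)
    (fun e => ((isBasis_countableBasis Y).isOpen e.2.2).preimage (g e.1).continuous)
    fun x y hxy => by
      obtain ⟨i, hi⟩ := hg x y hxy
      obtain ⟨U, V, hU, hV, hxU, hyV, hUV⟩ := t2_separation hi
      obtain ⟨U', hU', hxU', hU'U⟩ := (isBasis_countableBasis Y).exists_subset_of_mem_open hxU hU
      obtain ⟨V', hV', hyV', hV'V⟩ := (isBasis_countableBasis Y).exists_subset_of_mem_open hyV hV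
      exact ⟨(i, ⟨U', hU'⟩), (i, ⟨V', hV'⟩), hxU', hyV', (hUV.mono hU'U hV'V).preimage _⟩
  have hE : #E ≤ max ℵ₀ #ι := calc
    #E = #ι * #(countableBasis Y) := by rw [mk_prod, lift_id, lift_id]
    _ ≤ #ι * ℵ₀ := mul_le_mul' le_rfl (mk_le_aleph0_iff.2 (countable_countableBasis Y).to_subtype)
    _ ≤ max ℵ₀ #ι := (mul_le_max_of_aleph0_le_right le_rfl).trans_eq (max_comm _ _)
  calc weight K ≤ _ := weight_le_mk hB
    _ ≤ #(Finset E) := mk_range_le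
    _ ≤ #(List E) := mk_le_of_surjective List.toFinset_surjective
    _ ≤ max ℵ₀ #E := mk_list_le_max E
    _ ≤ max ℵ₀ #ι := max_le (le_max_left _ _) hE

lemma exists_ne_forall_eq_of_lt_weight [CompactSpace K] {ι Y : Type} [TopologicalSpace Y]
    [T2Space Y] [SecondCountableTopology Y] (g : ι → C(K, Y)) (hg : max ℵ₀ #ι < weight K) :
    ∃ x y, x ≠ y ∧ ∀ i, g i x = g i y := by
  by_contra! h
  exact (weight_le_of_separating g h).not_gt hg

end Weight

section Bidiscrete

variable {K : Type} [TopologicalSpace K]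

def IsBidiscrete {ι : Type} (x y : ι → K) (f : ι → C(K, ℝ)) : Prop :=
  (∀ α, f α (x α) = 0 ∧ f α (y α) = 1) ∧ ∀ α β, α ≠ β → f α (x β) = f α (y β)

variable {ι : Type} {x y : ι → K} {f : ι → C(K, ℝ)}

lemma IsBidiscrete.mk_le_weight_mul_self (h : IsBidiscrete x y f) :
    #ι ≤ weight K * weight K := by
  obtain ⟨B, hB, hBw⟩ := exists_isTopologicalBasis_mk_eq_weight K
  have hU := fun α => hB.exists_subset_of_mem_open (a := x α) (u := f α ⁻¹' Iio (1 / 2))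
    (by norm_num [(h.1 α).1]) (isOpen_Iio.preimage (f α).continuous)
  have hV := fun α => hB.exists_subset_of_mem_open (a := y α) (u := f α ⁻¹' Ioi (1 / 2))
    (by norm_num [(h.1 α).2]) (isOpen_Ioi.preimage (f α).continuous)
  choose U hUB hxU hUf using hU
  choose V hVB hyV hVf using hV
  have hinj : Function.Injective fun α => ((⟨U α, hUB α⟩ : B), (⟨V α, hVB α⟩ : B)) := by
    intro α β hαβ
    by_contra hne
    simp only [Prod.mk.injEq, Subtype.mk.injEq] at hαβ
    have hx : f α (x β) < 1 / 2 := hUf α (hαβ.1 ▸ hxU β)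
    have hy : 1 / 2 < f α (y β) := hVf α (hαβ.2 ▸ hyV β)
    linarith [h.2 α β hne]
  simpa [hBw] using mk_le_of_injective hinj

lemma IsBidiscrete.mk_le_bd (h : IsBidiscrete x y f) : #ι ≤ bd K := by
  refine le_csSup ⟨weight K * weight K, ?_⟩ ⟨ι, x, y, f, rfl, h.1, h.2⟩
  rintro _ ⟨ι, x, y, f, rfl, h⟩
  exact IsBidiscrete.mk_le_weight_mul_self h

lemma bd_le {c : Cardinal}
    (h : ∀ (ι : Type) (x y : ι → K) (f : ι → C(K, ℝ)), IsBidiscrete x y f → #ι ≤ c) :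
    bd K ≤ c := by
  refine csSup_le ⟨0, PEmpty, PEmpty.elim, PEmpty.elim, PEmpty.elim, by simp, by simp, by simp⟩ ?_
  rintro _ ⟨ι, x, y, f, rfl, hxyf⟩
  exact h ι x y f hxyf

lemma bd_le_weight_mul_self : bd K ≤ weight K * weight K :=
  bd_le fun _ _ _ _ h => h.mk_le_weight_mul_self

lemma bd_eq_zero [IsEmpty K] : bd K = 0 :=
  le_zero_iff.1 <| bd_le fun ι x _ _ _ => by
    have : IsEmpty ι := ⟨fun i => isEmptyElim (x i)⟩
    simp

lemma aleph0_le_bd [T2Space K] [NormalSpace K] [Infinite K] : ℵ₀ ≤ bd K := by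
  obtain ⟨U, hUinf, hUo, hUd⟩ := exists_seq_infinite_isOpen_pairwise_disjoint K
  choose x hxU y hyU hxy using fun n => (hUinf n).nontrivial
  choose f hf0 hf1 _ using fun n => exists_continuous_zero_one_of_isClosed
    ((hUo n).isClosed_compl.union isClosed_singleton) (isClosed_singleton (x := y n))
    (disjoint_singleton_right.2 fun h => h.elim (· (hyU n)) fun h => hxy n h.symm)
  have hout : ∀ m n, m ≠ n → ∀ z ∈ U n, z ∈ (U m)ᶜ ∪ {x m} := fun m n hmn z hz =>
    Or.inl fun hz' => (hUd hmn).le_bot ⟨hz', hz⟩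
  have : IsBidiscrete x y f := ⟨fun n => ⟨hf0 n (Or.inr rfl), hf1 n rfl⟩, fun m n hmn =>
    (hf0 m (hout m n hmn _ (hxU n))).trans (hf0 m (hout m n hmn _ (hyU n))).symm⟩
  simpa using this.mk_le_bd

end Bidiscrete

section Semibidiscrete

variable {K : Type} [TopologicalSpace K]

def IsSemibidiscrete {O : Type} [LT O] (x y : O → K) (f : O → C(K, ℝ)) : Prop :=
  (∀ i, f i (x i) = 0 ∧ f i (y i) = 1) ∧ ∀ i j, i < j → f i (x j) = f i (y j)

lemma exists_isSemibidiscrete [CompactSpace K] [T2Space K] {O : Type} [LinearOrder O]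
    [WellFoundedLT O] (hO : ∀ i : O, max ℵ₀ #(Iio i) < weight K) :
    ∃ (x y : O → K) (f : O → C(K, ℝ)), IsSemibidiscrete x y f ∧ ∀ i z, f i z ∈ Icc 0 1 := by
  have step : ∀ (i : O) (prev : Iio i → C(K, ℝ)), ∃ t : K × K × C(K, ℝ),
      (t.2.2 t.1 = 0 ∧ t.2.2 t.2.1 = 1 ∧ ∀ z, t.2.2 z ∈ Icc 0 1) ∧
        ∀ j, prev j t.1 = prev j t.2.1 := by
    intro i prev
    obtain ⟨u, v, huv, hsame⟩ := exists_ne_forall_eq_of_lt_weight prev (hO i)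
    obtain ⟨f, hf0, hf1, hf⟩ := exists_continuous_zero_one_of_isClosed isClosed_singleton
      isClosed_singleton (disjoint_singleton.2 huv)
    exact ⟨(u, v, f), ⟨hf0 rfl, hf1 rfl, hf⟩, hsame⟩
  choose next hnext using step
  let F : O → K × K × C(K, ℝ) :=
    wellFounded_lt.fix fun i rec => next i fun j => (rec j j.2).2.2
  have hF : ∀ i, F i = next i fun j => (F j).2.2 := wellFounded_lt.fix_eq _
  have hspec : ∀ i, ((F i).2.2 (F i).1 = 0 ∧ (F i).2.2 (F i).2.1 = 1 ∧
      ∀ z, (F i).2.2 z ∈ Icc 0 1) ∧ ∀ j : Iio i, (F j).2.2 (F i).1 = (F j).2.2 (F i).2.1 :=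
    fun i => by rw [hF i]; exact hnext i _
  exact ⟨fun i => (F i).1, fun i => (F i).2.1, fun i => (F i).2.2,
    ⟨fun i => ⟨(hspec i).1.1, (hspec i).1.2.1⟩, fun i j hij => (hspec j).2 ⟨i, hij⟩⟩,
    fun i => (hspec i).1.2.2⟩

lemma IsSemibidiscrete.comp {O : Type} [LT O] {x y : O → K} {f : O → C(K, ℝ)}
    (hf : IsSemibidiscrete x y f) {θ : C(ℝ, ℝ)} (h0 : θ 0 = 0) (h1 : θ 1 = 1) :
    IsSemibidiscrete x y fun i => θ.comp (f i) :=
  ⟨fun i => by simp [(hf.1 i).1, (hf.1 i).2, h0, h1], fun i j hij => by simp [hf.2 i j hij]⟩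

/-- At a point `b j` outside `[a i, b i]`, both `g (b i)` and `g (a i)` take the same difference
on the pair `b j`: `δ` when `b j < a i`, and `0` when `b i < b j`. -/
lemma IsSemibidiscrete.isBidiscrete_of_pairs {O ι : Type} [LinearOrder O] {x y : O → K}
    {g : O → C(K, ℝ)} (hg : IsSemibidiscrete x y g) {H : Set O} {δ : ℝ}
    (hδ : ∀ a ∈ H, ∀ b ∈ H, a < b → g b (x a) - g b (y a) = δ) {a b : ι → O}
    (hab : ∀ i, a i ∈ H ∧ b i ∈ H ∧ a i < b i) (hsep : ∀ i j, i ≠ j → b j ∉ Icc (a i) (b i)) :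
    IsBidiscrete (x ∘ b) (y ∘ b)
      fun i => g (b i) - g (a i) + ContinuousMap.const K (g (a i) (x (b i))) := by
  refine ⟨fun i => ?_, fun i j hij => ?_⟩
  · have hai := hg.2 _ _ (hab i).2.2
    simp only [Function.comp_apply, ContinuousMap.add_apply, ContinuousMap.sub_apply,
      ContinuousMap.const_apply, (hg.1 (b i)).1, (hg.1 (b i)).2]
    constructor <;> linarith
  · suffices g (b i) (x (b j)) - g (b i) (y (b j)) = g (a i) (x (b j)) - g (a i) (y (b j)) by
      simp only [Function.comp_apply, ContinuousMap.add_apply, ContinuousMap.sub_apply,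
        ContinuousMap.const_apply]
      linarith
    obtain ⟨ha, hb, hlt⟩ := hab i
    rcases not_and_or.1 (hsep i j hij) with h | h <;> rw [not_le] at h
    · rw [hδ _ (hab j).2.1 _ hb (h.trans hlt), hδ _ (hab j).2.1 _ ha h]
    · rw [hg.2 _ _ h, hg.2 _ _ (hlt.trans h), sub_self, sub_self]

end Semibidiscrete

noncomputable def clamp (p q : ℝ) : C(ℝ, ℝ) :=
  ⟨fun t => max 0 (min 1 ((t - p) / (q - p))), by fun_prop⟩

lemma clamp_of_le {p q t : ℝ} (hpq : p < q) (ht : t ≤ p) : clamp p q t = 0 :=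
  max_eq_left <| (min_le_right _ _).trans <|
    div_nonpos_of_nonpos_of_nonneg (by linarith) (by linarith)

lemma clamp_of_ge {p q t : ℝ} (hpq : p < q) (ht : q ≤ t) : clamp p q t = 1 := by
  have : 1 ≤ (t - p) / (q - p) := (one_le_div (by linarith)).2 (by linarith)
  simp [clamp, min_eq_left this]

lemma exists_clamp_sub_eq_int {u v : ℝ} (hu : u ∈ Icc (0 : ℝ) 1) (hv : v ∈ Icc (0 : ℝ) 1) :
    ∃ (p q : ℚ) (δ : ℤ), 0 ≤ (p : ℝ) ∧ (p : ℝ) < q ∧ (q : ℝ) ≤ 1 ∧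
      clamp p q u - clamp p q v = δ := by
  rcases lt_trichotomy u v with h | rfl | h
  · obtain ⟨p, hup, hpv⟩ := exists_rat_btwn h
    obtain ⟨q, hpq, hqv⟩ := exists_rat_btwn hpv
    refine ⟨p, q, -1, by linarith [hu.1], hpq, by linarith [hv.2], ?_⟩
    rw [clamp_of_le hpq hup.le, clamp_of_ge hpq hqv.le]
    norm_num
  · exact ⟨0, 1, 0, by norm_num, by norm_num, by norm_num, by simp⟩
  · obtain ⟨p, hvp, hpu⟩ := exists_rat_btwn h
    obtain ⟨q, hpq, hqu⟩ := exists_rat_btwn hpu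
    refine ⟨p, q, 1, by linarith [hv.1], hpq, by linarith [hu.2], ?_⟩
    rw [clamp_of_le hpq hvp.le, clamp_of_ge hpq hqu.le]
    norm_num

lemma succ_le_bd_of_two_power_lt_weight {K : Type} [TopologicalSpace K] [CompactSpace K]
    [T2Space K] {l : Cardinal} (hl : ℵ₀ ≤ l) (hw : 2 ^ l < weight K) :
    Order.succ l ≤ bd K := by
  let O := (Order.succ ((2 : Cardinal) ^ l)).ord.ToType
  have hO : #O = Order.succ ((2 : Cardinal) ^ l) := by rw [mk_toType, card_ord]
  have hIio : ∀ i : O, max ℵ₀ #(Iio i) < weight K := fun i =>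
    max_lt ((hl.trans (cantor l).le).trans_lt hw) <| (Order.lt_succ_iff.1 <|
      (mk_Iio_lt i (by rw [hO, Ordinal.type_toType])).trans_eq hO).trans_lt hw
  obtain ⟨x, y, f, hf, hf01⟩ := exists_isSemibidiscrete hIio
  choose p q δ hp hpq hq hδ using fun a b : O =>
    exists_clamp_sub_eq_int (hf01 b (x a)) (hf01 b (y a))
  obtain ⟨H, ⟨p₀, q₀, δ₀⟩, hH, hhom⟩ := erdos_rado hl (mk_le_aleph0.trans hl)
    (hO ▸ Order.lt_succ _) fun z => (p z.inf z.sup, q z.inf z.sup, δ z.inf z.sup)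
  have hcol : ∀ a ∈ H, ∀ b ∈ H, a < b → p a b = p₀ ∧ q a b = q₀ ∧ δ a b = δ₀ := by
    intro a ha b hb hab
    simpa [inf_of_le_left hab.le, sup_of_le_right hab.le] using hhom a ha b hb hab.ne
  obtain ⟨a₀, ha₀, b₀, hb₀, hab₀⟩ : ∃ a ∈ H, ∃ b ∈ H, a < b :=
    (nontrivial_coe_sort.1 <| one_lt_iff_nontrivial.1 <|
      (one_lt_aleph0.trans_le (hl.trans (Order.le_succ l))).trans_le hH).exists_lt
  obtain ⟨hp₀, hq₀, -⟩ := hcol a₀ ha₀ b₀ hb₀ hab₀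
  have hpq₀ : (p₀ : ℝ) < q₀ := hp₀ ▸ hq₀ ▸ hpq a₀ b₀
  have hg := hf.comp (θ := clamp p₀ q₀) (clamp_of_le hpq₀ (hp₀ ▸ hp a₀ b₀))
    (clamp_of_ge hpq₀ (hq₀ ▸ hq a₀ b₀))
  have hgδ : ∀ a ∈ H, ∀ b ∈ H, a < b →
      (clamp p₀ q₀).comp (f b) (x a) - (clamp p₀ q₀).comp (f b) (y a) = δ₀ := by
    intro a ha b hb hab
    obtain ⟨rfl, rfl, rfl⟩ := hcol a ha b hb hab
    exact hδ a b
  obtain ⟨a, b, hab, hsep⟩ := exists_pairs_of_le_mk (hl.trans_lt (Order.lt_succ l)) hH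
  simpa [mk_toType, card_ord] using (hg.isBidiscrete_of_pairs hgδ hab hsep).mk_le_bd

/-- If `K` is a compact Hausdorff space whose weight is a strong limit cardinal
(`2^λ < w(K)` for every `λ < w(K)`), then `w(K) = bd(K)`. -/
theorem weight_eq_bd_of_strong_limit (K : Type) [TopologicalSpace K]
    [CompactSpace K] [T2Space K]
    (h : ∀ c : Cardinal, c < weight K → (2 : Cardinal) ^ c < weight K) :
    weight K = bd K := by
  rcases eq_or_ne (weight K) 0 with hw | hw
  · have := isEmpty_of_weight_eq_zero hw
    rw [hw, bd_eq_zero]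
  have hlim : IsStrongLimit (weight K) := ⟨hw, h⟩
  have : Infinite K := infinite_iff.2 <| not_lt.1 fun hK =>
    (hlim.aleph0_le.trans weight_le_two_power_mk).not_gt
      (power_lt_aleph0 (natCast_lt_aleph0 (n := 2)) hK)
  refine le_antisymm (not_lt.1 fun hlt => ?_)
    (bd_le_weight_mul_self.trans_eq (mul_eq_self hlim.aleph0_le))
  exact (Order.lt_succ _).not_ge (succ_le_bd_of_two_power_lt_weight aleph0_le_bd (h _ hlt))
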